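/- Let 𝒱 : ℝ⁴ → ℝ be the cubic polynomial 𝒱(t₁,t₂,t₃,t₄) := t₁t₂t₄ + 2t₂t₃t₄ + 2t₁t₃t₄ − 4t₂t₃² − 4t₁t₃², and define M i j := 4·(∂𝒱/∂t_i)·(∂𝒱/∂t_j) − 4·𝒱·(∂²𝒱/∂t_i∂t_j). Then for all reals σ, δ, every integer k, evaluating at t = (σ, σ, δ, 5δ) and taking Σ := (k, −k, 0, 0): ∑_{i,j} Σ i · M i j · Σ j = 480·k²·σ·δ³ + 200·k²·σ²·δ², i.e. ΣᵀMΣ = 40·k²·δ·𝒱(σ,σ,δ,5δ) with 𝒱(σ,σ,δ,5δ) = 5σ²δ + 12σδ². -/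

import Mathlib

/-- The volume polynomial `𝒱(t₁,t₂,t₃,t₄) = t₁t₂t₄ + 2t₂t₃t₄ + 2t₁t₃t₄ − 4t₂t₃² − 4t₁t₃²`. -/
noncomputable def volPoly (t : Fin 4 → ℝ) : ℝ :=
  t 0 * t 1 * t 3 + 2 * t 1 * t 2 * t 3 + 2 * t 0 * t 2 * t 3
    - 4 * t 1 * t 2 ^ 2 - 4 * t 0 * t 2 ^ 2

/-- First partial derivative `∂𝒱/∂t_i`. -/
noncomputable def tauP (t : Fin 4 → ℝ) (i : Fin 4) : ℝ :=
  fderiv ℝ volPoly t (Pi.single i 1)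

/-- Second partial derivative `∂²𝒱/∂t_i∂t_j`. -/
noncomputable def tauPP (t : Fin 4 → ℝ) (i j : Fin 4) : ℝ :=
  fderiv ℝ (fun s => fderiv ℝ volPoly s (Pi.single j 1)) t (Pi.single i 1)

/-- Inverse Kähler metric `M i j = 4(∂𝒱/∂t_i)(∂𝒱/∂t_j) − 4𝒱(∂²𝒱/∂t_i∂t_j)`. -/
noncomputable def metP (t : Fin 4 → ℝ) (i j : Fin 4) : ℝ :=
  4 * tauP t i * tauP t j - 4 * volPoly t * tauPP t i j

noncomputable def gradV (t : Fin 4 → ℝ) : (Fin 4 → ℝ) →L[ℝ] ℝ :=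
  (t 1 * t 3 + 2 * t 2 * t 3 - 4 * t 2 ^ 2) • ContinuousLinearMap.proj 0 +
  (t 0 * t 3 + 2 * t 2 * t 3 - 4 * t 2 ^ 2) • ContinuousLinearMap.proj 1 +
  (2 * t 1 * t 3 + 2 * t 0 * t 3 - 8 * t 1 * t 2 - 8 * t 0 * t 2) • ContinuousLinearMap.proj 2 +
  (t 0 * t 1 + 2 * t 1 * t 2 + 2 * t 0 * t 2) • ContinuousLinearMap.proj 3

lemma hasFDerivAt_vol (t : Fin 4 → ℝ) : HasFDerivAt volPoly (gradV t) t := by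
  have hp : ∀ i : Fin 4, HasFDerivAt (fun f : Fin 4 → ℝ => f i) (ContinuousLinearMap.proj (R := ℝ) (φ := fun _ : Fin 4 => ℝ) i) t :=
    fun i => hasFDerivAt_apply (𝕜 := ℝ) i t
  have h := (((((hp 0).mul (hp 1)).mul (hp 3)).add
      ((((hp 1).const_mul 2).mul (hp 2)).mul (hp 3))).add
      ((((hp 0).const_mul 2).mul (hp 2)).mul (hp 3))).sub
      (((hp 1).const_mul 4).mul ((hp 2).mul (hp 2))) |>.sub
      (((hp 0).const_mul 4).mul ((hp 2).mul (hp 2)))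
  have hfun : volPoly = fun s : Fin 4 → ℝ =>
      (s 0 * s 1 * s 3 + 2 * s 1 * s 2 * s 3 + 2 * s 0 * s 2 * s 3
        - 4 * s 1 * (s 2 * s 2)) - 4 * s 0 * (s 2 * s 2) := by
    funext s; simp [volPoly]; ring
  rw [hfun]
  refine h.congr_fderiv ?_
  ext v
  simp [gradV]
  ring

lemma tauP0 (t : Fin 4 → ℝ) : tauP t 0 = t 1 * t 3 + 2 * t 2 * t 3 - 4 * t 2 ^ 2 := by
  rw [tauP, (hasFDerivAt_vol t).fderiv]
  simp [gradV, Pi.single_apply]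

lemma tauP1 (t : Fin 4 → ℝ) : tauP t 1 = t 0 * t 3 + 2 * t 2 * t 3 - 4 * t 2 ^ 2 := by
  rw [tauP, (hasFDerivAt_vol t).fderiv]
  simp [gradV, Pi.single_apply]

lemma fder_vol0 : (fun s : Fin 4 → ℝ => fderiv ℝ volPoly s (Pi.single (0 : Fin 4) 1))
    = fun s => s 1 * s 3 + 2 * s 2 * s 3 - 4 * (s 2 * s 2) := by
  funext s
  rw [(hasFDerivAt_vol s).fderiv]
  simp [gradV, Pi.single_apply]
  ring

lemma fder_vol1 : (fun s : Fin 4 → ℝ => fderiv ℝ volPoly s (Pi.single (1 : Fin 4) 1))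
    = fun s => s 0 * s 3 + 2 * s 2 * s 3 - 4 * (s 2 * s 2) := by
  funext s
  rw [(hasFDerivAt_vol s).fderiv]
  simp [gradV, Pi.single_apply]
  ring

noncomputable def grad0 (t : Fin 4 → ℝ) : (Fin 4 → ℝ) →L[ℝ] ℝ :=
  (t 3) • ContinuousLinearMap.proj 1 +
  (2 * t 3 - 8 * t 2) • ContinuousLinearMap.proj 2 +
  (t 1 + 2 * t 2) • ContinuousLinearMap.proj 3

noncomputable def grad1 (t : Fin 4 → ℝ) : (Fin 4 → ℝ) →L[ℝ] ℝ :=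
  (t 3) • ContinuousLinearMap.proj 0 +
  (2 * t 3 - 8 * t 2) • ContinuousLinearMap.proj 2 +
  (t 0 + 2 * t 2) • ContinuousLinearMap.proj 3

lemma hasFDerivAt_g0 (t : Fin 4 → ℝ) :
    HasFDerivAt (fun s : Fin 4 → ℝ => s 1 * s 3 + 2 * s 2 * s 3 - 4 * (s 2 * s 2))
      (grad0 t) t := by
  have hp : ∀ i : Fin 4, HasFDerivAt (fun f : Fin 4 → ℝ => f i) (ContinuousLinearMap.proj (R := ℝ) (φ := fun _ : Fin 4 => ℝ) i) t :=
    fun i => hasFDerivAt_apply (𝕜 := ℝ) i t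
  have h := (((hp 1).mul (hp 3)).add ((((hp 2).const_mul 2)).mul (hp 3))).sub
      (((hp 2).mul (hp 2)).const_mul 4)
  refine h.congr_fderiv ?_
  ext v
  simp [grad0]
  ring

lemma hasFDerivAt_g1 (t : Fin 4 → ℝ) :
    HasFDerivAt (fun s : Fin 4 → ℝ => s 0 * s 3 + 2 * s 2 * s 3 - 4 * (s 2 * s 2))
      (grad1 t) t := by
  have hp : ∀ i : Fin 4, HasFDerivAt (fun f : Fin 4 → ℝ => f i) (ContinuousLinearMap.proj (R := ℝ) (φ := fun _ : Fin 4 => ℝ) i) t :=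
    fun i => hasFDerivAt_apply (𝕜 := ℝ) i t
  have h := (((hp 0).mul (hp 3)).add ((((hp 2).const_mul 2)).mul (hp 3))).sub
      (((hp 2).mul (hp 2)).const_mul 4)
  refine h.congr_fderiv ?_
  ext v
  simp [grad1]
  ring

lemma tauPP0 (t : Fin 4 → ℝ) (i : Fin 4) : tauPP t i 0 = grad0 t (Pi.single i 1) := by
  rw [tauPP, fder_vol0, (hasFDerivAt_g0 t).fderiv]

lemma tauPP1 (t : Fin 4 → ℝ) (i : Fin 4) : tauPP t i 1 = grad1 t (Pi.single i 1) := by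
  rw [tauPP, fder_vol1, (hasFDerivAt_g1 t).fderiv]

lemma tauPP00 (t : Fin 4 → ℝ) : tauPP t 0 0 = 0 := by
  rw [tauPP0]; simp [grad0, Pi.single_apply]

lemma tauPP10 (t : Fin 4 → ℝ) : tauPP t 1 0 = t 3 := by
  rw [tauPP0]; simp [grad0, Pi.single_apply]

lemma tauPP01 (t : Fin 4 → ℝ) : tauPP t 0 1 = t 3 := by
  rw [tauPP1]; simp [grad1, Pi.single_apply]

lemma tauPP11 (t : Fin 4 → ℝ) : tauPP t 1 1 = 0 := by
  rw [tauPP1]; simp [grad1, Pi.single_apply]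

/-- At `t = (σ, σ, δ, 5δ)` with `Σ = (k, −k, 0, 0)`:
`Σᵀ M Σ = 480k²σδ³ + 200k²σ²δ² = 40k²δ·𝒱`, where `𝒱 = 5σ²δ + 12σδ²`. -/
theorem norm_squared_of_charge (σ δ : ℝ) (k : ℤ) :
    (∑ i, ∑ j, (![(k : ℝ), -(k : ℝ), 0, 0]) i * metP ![σ, σ, δ, 5 * δ] i j *
        (![(k : ℝ), -(k : ℝ), 0, 0]) j) =
      480 * (k : ℝ) ^ 2 * σ * δ ^ 3 + 200 * (k : ℝ) ^ 2 * σ ^ 2 * δ ^ 2 ∧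
    (∑ i, ∑ j, (![(k : ℝ), -(k : ℝ), 0, 0]) i * metP ![σ, σ, δ, 5 * δ] i j *
        (![(k : ℝ), -(k : ℝ), 0, 0]) j) =
      40 * (k : ℝ) ^ 2 * δ * volPoly ![σ, σ, δ, 5 * δ] ∧
    volPoly ![σ, σ, δ, 5 * δ] = 5 * σ ^ 2 * δ + 12 * σ * δ ^ 2 := by
  have hvol : volPoly ![σ, σ, δ, 5 * δ] = 5 * σ ^ 2 * δ + 12 * σ * δ ^ 2 := by
    simp [volPoly]; ring
  have hsum : (∑ i, ∑ j, (![(k : ℝ), -(k : ℝ), 0, 0]) i * metP ![σ, σ, δ, 5 * δ] i j *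
      (![(k : ℝ), -(k : ℝ), 0, 0]) j) =
      480 * (k : ℝ) ^ 2 * σ * δ ^ 3 + 200 * (k : ℝ) ^ 2 * σ ^ 2 * δ ^ 2 := by
    simp only [Fin.sum_univ_four, Matrix.cons_val_zero, Matrix.cons_val_one, Matrix.head_cons,
      Matrix.cons_val_two, Matrix.tail_cons, Matrix.cons_val_three, mul_zero, zero_mul,
      add_zero, zero_add]
    rw [metP, metP, metP, metP, tauP0, tauP1, tauPP00, tauPP01, tauPP10, tauPP11, hvol]
    simp only [Matrix.cons_val_zero, Matrix.cons_val_one, Matrix.head_cons,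
      Matrix.cons_val_two, Matrix.tail_cons, Matrix.cons_val_three]
    ring
  exact ⟨hsum, by rw [hsum, hvol]; ring, hvol⟩
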